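/- Let G be a snake graph and D a double dimer cover of G, and let D_min be the minimal double dimer cover. Then the symmetric difference D ⊖ D_min consists of edges (single or double) enclosing sets of consecutive tiles of G, and its completion (D ⊖ D_min)^c is a snake sub-multigraph of the doubled graph of G (the multigraph obtained by superimposing two copies of G). -/

import Mathlib

/-! ### Snake graphs, dimer covers and double dimer covers -/

/-- Gluing direction for consecutive tiles of a snake graph. -/
inductive Dir : Type
  | east : Dir
  | north : Dir
deriving DecidableEq

/-- An (abstract) snake graph, encoded by the sequence of gluing directions:
tile `i+1` is glued to the East or North edge of tile `i`.  It has `dirs.length + 1`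
square tiles. -/
structure SnakeGraph : Type where
  dirs : List Dir

/-- An edge of the ambient square lattice: `(p, true)` is the horizontal edge joining `p`
and `p + (1,0)`, while `(p, false)` is the vertical edge joining `p` and `p + (0,1)`. -/
abbrev SnakeEdge : Type := (ℤ × ℤ) × Bool

namespace SnakeGraph

/-- The two endpoints of an edge. -/
def ends (e : SnakeEdge) : Finset (ℤ × ℤ) :=
  if e.2 then {e.1, (e.1.1 + 1, e.1.2)} else {e.1, (e.1.1, e.1.2 + 1)}

/-- South edge of the tile with bottom-left corner `p`. -/
def south (p : ℤ × ℤ) : SnakeEdge := (p, true)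
/-- North edge of the tile with bottom-left corner `p`. -/
def north (p : ℤ × ℤ) : SnakeEdge := ((p.1, p.2 + 1), true)
/-- West edge of the tile with bottom-left corner `p`. -/
def west (p : ℤ × ℤ) : SnakeEdge := (p, false)
/-- East edge of the tile with bottom-left corner `p`. -/
def east (p : ℤ × ℤ) : SnakeEdge := ((p.1 + 1, p.2), false)

/-- The four edges of the tile with bottom-left corner `p`. -/
def tileEdges (p : ℤ × ℤ) : Finset SnakeEdge := {south p, north p, west p, east p}

/-- The four vertices of the tile with bottom-left corner `p`. -/
def tileVertices (p : ℤ × ℤ) : Finset (ℤ × ℤ) :=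
  {p, (p.1 + 1, p.2), (p.1, p.2 + 1), (p.1 + 1, p.2 + 1)}

/-- The number of tiles of a snake graph. -/
def numTiles (G : SnakeGraph) : ℕ := G.dirs.length + 1

/-- The bottom-left corner of the `i`-th tile (`0`-based). -/
def pos (G : SnakeGraph) (i : ℕ) : ℤ × ℤ :=
  (((G.dirs.take i).count Dir.east : ℤ), ((G.dirs.take i).count Dir.north : ℤ))

/-- The (positions of the) tiles of `G`. -/
def tiles (G : SnakeGraph) : Finset (ℤ × ℤ) := (Finset.range G.numTiles).image G.pos

/-- The edge set of `G`. -/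
def edges (G : SnakeGraph) : Finset SnakeEdge := G.tiles.biUnion tileEdges

/-- The vertex set of `G`. -/
def vertices (G : SnakeGraph) : Finset (ℤ × ℤ) := G.tiles.biUnion tileVertices

/-- The boundary edges of `G`: edges belonging to exactly one tile.  The remaining
edges (shared by two adjacent tiles) are the interior edges. -/
def boundaryEdges (G : SnakeGraph) : Finset SnakeEdge :=
  G.edges.filter fun e => (G.tiles.filter fun p => e ∈ tileEdges p).card = 1

/-- The edges of the sub-snake graph on the consecutive tiles `a, a+1, …, b` of `G`. -/
def intervalEdges (G : SnakeGraph) (a b : ℕ) : Finset SnakeEdge :=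
  (Finset.Icc a b).biUnion fun i => tileEdges (G.pos i)

/-- The vertices of the sub-snake graph on tiles `a, …, b`. -/
def intervalVertices (G : SnakeGraph) (a b : ℕ) : Finset (ℤ × ℤ) :=
  (Finset.Icc a b).biUnion fun i => tileVertices (G.pos i)

/-- The boundary edges of the sub-snake graph on tiles `a, …, b`. -/
def intervalBoundaryEdges (G : SnakeGraph) (a b : ℕ) : Finset SnakeEdge :=
  (G.intervalEdges a b).filter fun e =>
    ((Finset.Icc a b).filter fun i => e ∈ tileEdges (G.pos i)).card = 1

/-- A perfect matching (dimer cover) of the sub-snake graph on tiles `a, …, b`: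
every vertex is incident to exactly one chosen edge. -/
def IsPerfectMatchingOn (G : SnakeGraph) (a b : ℕ) (P : Finset SnakeEdge) : Prop :=
  P ⊆ G.intervalEdges a b ∧
    ∀ v ∈ G.intervalVertices a b, (P.filter fun e => v ∈ ends e).card = 1

/-- A perfect matching (dimer cover) of `G`. -/
def IsPerfectMatching (G : SnakeGraph) (P : Finset SnakeEdge) : Prop :=
  G.IsPerfectMatchingOn 0 (G.numTiles - 1) P

/-- The minimal matching of the sub-snake graph on tiles `a, …, b`: the boundary
perfect matching containing the West edge of its first tile. -/
def IsMinimalMatchingOn (G : SnakeGraph) (a b : ℕ) (P : Finset SnakeEdge) : Prop :=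
  G.IsPerfectMatchingOn a b P ∧ P ⊆ G.intervalBoundaryEdges a b ∧ west (G.pos a) ∈ P

/-- The maximal matching of the sub-snake graph on tiles `a, …, b`: the boundary
perfect matching complementary to the minimal one (it does not contain the West edge
of the first tile). -/
def IsMaximalMatchingOn (G : SnakeGraph) (a b : ℕ) (P : Finset SnakeEdge) : Prop :=
  G.IsPerfectMatchingOn a b P ∧ P ⊆ G.intervalBoundaryEdges a b ∧ west (G.pos a) ∉ P

/-- The minimal matching of `G`. -/
def IsMinimalMatching (G : SnakeGraph) (P : Finset SnakeEdge) : Prop :=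
  G.IsMinimalMatchingOn 0 (G.numTiles - 1) P

/-- The maximal matching of `G`. -/
def IsMaximalMatching (G : SnakeGraph) (P : Finset SnakeEdge) : Prop :=
  G.IsMaximalMatchingOn 0 (G.numTiles - 1) P

/-- A `d`-dimer cover of `G`: a multiset of edges of `G` in which every vertex of `G` is
incident to exactly `d` edges, counted with multiplicity. -/
def IsDDimerCover (G : SnakeGraph) (d : ℕ) (D : Multiset SnakeEdge) : Prop :=
  (∀ e ∈ D, e ∈ G.edges) ∧
    ∀ v ∈ G.vertices, Multiset.card (D.filter fun e => v ∈ ends e) = d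

/-- A double dimer cover of `G`. -/
def IsDoubleDimerCover (G : SnakeGraph) (D : Multiset SnakeEdge) : Prop :=
  G.IsDDimerCover 2 D

/-- Two copies of each edge of a set of edges. -/
def doubled (P : Finset SnakeEdge) : Multiset SnakeEdge := P.val + P.val

/-- The symmetric difference of two multisets of edges: `(D ∪ D') \ (D ∩ D')`, the union
taking maximal multiplicities and the intersection minimal ones. -/
def symmDiff (D D' : Multiset SnakeEdge) : Multiset SnakeEdge := (D ∪ D') - (D ∩ D')

/-- The boundary edges of the tile at position `p` (edges of the tile that are boundary
edges of `G`). -/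
def tileBoundary (G : SnakeGraph) (p : ℤ × ℤ) : Finset SnakeEdge :=
  tileEdges p ∩ G.boundaryEdges

/-- The completion `H^c` of a sub-multigraph `H` of (doubled) `G`: add a single copy of
each missing edge of every tile having at least one boundary edge in `H`. -/
def completion (G : SnakeGraph) (H : Multiset SnakeEdge) : Multiset SnakeEdge :=
  H + (G.edges.filter fun e =>
    e ∉ H ∧ ∃ p ∈ G.tiles, e ∈ tileEdges p ∧ ∃ e' ∈ G.tileBoundary p, e' ∈ H).val

/-- `H` is a snake sub-multigraph of the doubled graph of `G`: every edge occurs with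
multiplicity at most `2`, and the underlying simple graph is a disjoint union of
sub-snake graphs of `G` on (pairwise non-adjacent) sets of consecutive tiles — i.e.
each connected component is a snake (multi)graph. -/
def IsSnakeSubMultigraph (G : SnakeGraph) (H : Multiset SnakeEdge) : Prop :=
  (∀ e, H.count e ≤ 2) ∧
    ∃ S : Finset (ℕ × ℕ),
      (∀ p ∈ S, p.1 ≤ p.2 ∧ p.2 < G.numTiles) ∧
      (∀ p ∈ S, ∀ q ∈ S, p ≠ q → p.2 + 1 < q.1 ∨ q.2 + 1 < p.1) ∧
      H.toFinset = S.biUnion fun p => G.intervalEdges p.1 p.2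

end SnakeGraph

/-!
Twisting the difference of the multiplicities in `D` and in `D_min` by the checkerboard sign
gives an edge function whose balance at every vertex says that it is closed, so it is the
gradient of a height function on the unit squares of the plane, normalised to vanish left of
the snake. Since the snake is a monotone staircase, from every square outside it one can go
straight left or straight down without meeting a tile, so the height vanishes off the snake.
Hence an edge lies in `D ⊖ D_min` iff it separates squares of different heights, and the
completion consists of the edges of the tiles of nonzero height; grouping these tiles into
maximal runs of consecutive indices exhibits it as a snake sub-multigraph. Multiplicities stay
at most two since `D` and `D_min` are double dimer covers.
-/

lemma Int.induction_of_neg_of_pred {P : ℤ → Prop} (hneg : ∀ a < 0, P a)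
    (hpred : ∀ a, P (a - 1) → P a) (a : ℤ) : P a := by
  induction a using Int.induction_on with
  | zero => exact hpred 0 (hneg _ (by norm_num))
  | succ n ih => exact hpred _ (by simpa using ih)
  | pred n _ => exact hneg _ (by omega)

lemma Finset.exists_pairwise_separated_Icc_cover (s : Finset ℕ) :
    ∃ S : Finset (ℕ × ℕ), (∀ p ∈ S, p.1 ≤ p.2) ∧
      (S : Set (ℕ × ℕ)).Pairwise (fun p q => p.2 + 1 < q.1 ∨ q.2 + 1 < p.1) ∧
      s = S.biUnion fun p => Finset.Icc p.1 p.2 := by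
  induction s using Finset.induction_on_max with
  | empty => exact ⟨∅, by simp, by simp, by simp⟩
  | insert m t hlt ih =>
    obtain ⟨S, hle, hsep, rfl⟩ := ih
    have hsnd : ∀ p ∈ S, p.2 < m := fun p hp =>
      hlt _ (Finset.mem_biUnion.2 ⟨p, hp, by simp [hle p hp]⟩)
    by_cases hprev : ∃ p₀ ∈ S, p₀.2 + 1 = m
    · obtain ⟨p₀, hp₀, rfl⟩ := hprev
      have hsep₀ : ∀ r ∈ S.erase p₀, r.2 + 1 < p₀.1 := fun r hr => by
        obtain ⟨hrp₀, hr⟩ := Finset.mem_erase.1 hr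
        have := hle r hr; have := hsnd r hr; have := hsep hp₀ hr hrp₀.symm
        omega
      refine ⟨insert (p₀.1, p₀.2 + 1) (S.erase p₀), ?_, ?_, ?_⟩
      · simp only [Finset.forall_mem_insert]
        exact ⟨(hle p₀ hp₀).trans (Nat.le_succ _),
          fun p hp => hle p (Finset.mem_of_mem_erase hp)⟩
      · rw [Finset.coe_insert, Set.pairwise_insert]
        exact ⟨hsep.mono (by simp),
          fun r hr _ => ⟨Or.inr (hsep₀ r hr), Or.inl (hsep₀ r hr)⟩⟩
      · conv_lhs => rw [← Finset.insert_erase hp₀]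
        rw [Finset.biUnion_insert, Finset.biUnion_insert, ← Finset.insert_union,
          Finset.insert_Icc_right_eq_Icc_add_one ((hle p₀ hp₀).trans (Nat.le_succ _))]
    · have hsep' : ∀ r ∈ S, r.2 + 1 < m := fun r hr => by
        have := hsnd r hr
        have : r.2 + 1 ≠ m := fun h => hprev ⟨r, hr, h⟩
        omega
      refine ⟨insert (m, m) S, ?_, ?_, ?_⟩
      · simpa using hle
      · rw [Finset.coe_insert, Set.pairwise_insert]
        exact ⟨hsep, fun r hr _ => ⟨Or.inr (hsep' r hr), Or.inl (hsep' r hr)⟩⟩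
      · rw [Finset.biUnion_insert, Finset.Icc_self, Finset.insert_eq]

namespace SnakeGraph

/-- `e.1` and `otherSquare e` are the two unit squares having `e` as a side. -/
def otherSquare (e : SnakeEdge) : ℤ × ℤ :=
  if e.2 then (e.1.1, e.1.2 - 1) else (e.1.1 - 1, e.1.2)

lemma otherSquare_ne (e : SnakeEdge) : otherSquare e ≠ e.1 := by
  obtain ⟨⟨a, b⟩, _ | _⟩ := e <;> simp [otherSquare]

lemma mem_tileEdges_iff {p : ℤ × ℤ} {e : SnakeEdge} :
    e ∈ tileEdges p ↔ p = e.1 ∨ p = otherSquare e := by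
  obtain ⟨⟨a, b⟩, _ | _⟩ := e <;>
    simp [tileEdges, south, north, west, east, otherSquare, Prod.ext_iff] <;> omega

lemma mem_ends_iff {a b : ℤ} {e : SnakeEdge} :
    (a, b) ∈ ends e ↔ e = ((a, b), true) ∨ e = ((a - 1, b), true) ∨ e = ((a, b), false) ∨
      e = ((a, b - 1), false) := by
  obtain ⟨⟨x, y⟩, _ | _⟩ := e <;> simp [ends, Prod.ext_iff] <;> omega

lemma card_filter_mem_ends (D : Multiset SnakeEdge) (a b : ℤ) :
    Multiset.card (D.filter fun e => (a, b) ∈ ends e) =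
      D.count ((a, b), true) + D.count ((a - 1, b), true) + D.count ((a, b), false) +
        D.count ((a, b - 1), false) := by
  induction D using Multiset.induction with
  | empty => simp
  | cons e D ih =>
    by_cases he : (a, b) ∈ ends e
    · rw [Multiset.filter_cons, if_pos he, Multiset.card_add, ih]
      rcases mem_ends_iff.1 he with rfl | rfl | rfl | rfl <;>
        simp [Multiset.count_cons, Prod.ext_iff] <;> (try split_ifs) <;> omega
    · rw [Multiset.filter_cons, if_neg he, zero_add, ih]
      simp only [mem_ends_iff, not_or] at he
      simp [Ne.symm he.1, Ne.symm he.2.1, Ne.symm he.2.2.1, Ne.symm he.2.2.2]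

lemma mem_symmDiff_iff_count_ne {D D' : Multiset SnakeEdge} {e : SnakeEdge} :
    e ∈ symmDiff D D' ↔ D.count e ≠ D'.count e := by
  rw [← Multiset.count_pos, symmDiff, Multiset.count_sub, Multiset.count_union,
    Multiset.count_inter]
  omega

section Height

variable (f : SnakeEdge → ℤ)

def height (p : ℤ × ℤ) : ℤ :=
  ∑ k ∈ Finset.range (p.1 + 1).toNat, f (((k : ℤ), p.2), false)

lemma height_of_neg {a : ℤ} (ha : a < 0) (b : ℤ) : height f (a, b) = 0 := by
  simp [height, Int.toNat_eq_zero.2 (show a + 1 ≤ 0 by omega)]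

variable {f} (hvanish : ∀ e : SnakeEdge, e.1.1 < 0 → f e = 0)
include hvanish

lemma height_sub_height_left (a b : ℤ) :
    height f (a, b) - height f (a - 1, b) = f ((a, b), false) := by
  rcases lt_or_ge a 0 with ha | ha
  · rw [height_of_neg f ha, height_of_neg f (by omega), hvanish _ ha, sub_zero]
  · lift a to ℕ using ha
    simp [height, Finset.sum_range_succ]

lemma height_below_sub_height
    (hbal : ∀ a b,
      f ((a, b), true) + f ((a, b), false) = f ((a - 1, b), true) + f ((a, b - 1), false))
    (a b : ℤ) : height f (a, b - 1) - height f (a, b) = f ((a, b), true) := by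
  induction a using Int.induction_of_neg_of_pred with
  | hneg a ha => rw [height_of_neg f ha, height_of_neg f ha, hvanish _ ha, sub_zero]
  | hpred a ih =>
    have := height_sub_height_left hvanish a b
    have := height_sub_height_left hvanish a (b - 1)
    linarith [hbal a b]

lemma eq_zero_iff_height_eq
    (hbal : ∀ a b,
      f ((a, b), true) + f ((a, b), false) = f ((a - 1, b), true) + f ((a, b - 1), false))
    (e : SnakeEdge) : f e = 0 ↔ height f e.1 = height f (otherSquare e) := by
  obtain ⟨⟨a, b⟩, _ | _⟩ := e
  · rw [← height_sub_height_left hvanish, sub_eq_zero]; rfl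
  · rw [← height_below_sub_height hvanish hbal, sub_eq_zero, eq_comm]; rfl

end Height

section Geometry

variable (G : SnakeGraph)

lemma mem_edges_iff {e : SnakeEdge} :
    e ∈ G.edges ↔ e.1 ∈ G.tiles ∨ otherSquare e ∈ G.tiles := by
  simp only [edges, Finset.mem_biUnion, mem_tileEdges_iff]
  aesop

lemma mem_boundaryEdges_iff {e : SnakeEdge} :
    e ∈ G.boundaryEdges ↔ (e.1 ∈ G.tiles ↔ otherSquare e ∉ G.tiles) := by
  have hfilter : G.tiles.filter (fun p => e ∈ tileEdges p) =
      ({e.1, otherSquare e} : Finset (ℤ × ℤ)).filter (· ∈ G.tiles) := by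
    ext p
    simp only [Finset.mem_filter, mem_tileEdges_iff, Finset.mem_insert, Finset.mem_singleton]
    tauto
  have hne := otherSquare_ne e
  rw [boundaryEdges, Finset.mem_filter, hfilter, mem_edges_iff]
  by_cases h₁ : e.1 ∈ G.tiles <;> by_cases h₂ : otherSquare e ∈ G.tiles <;>
    simp [Finset.filter_insert, Finset.filter_singleton, h₁, h₂, hne.symm]

lemma mem_tiles {p : ℤ × ℤ} : p ∈ G.tiles ↔ ∃ i < G.numTiles, G.pos i = p := by
  simp [tiles]

lemma pos_zero : G.pos 0 = 0 := by
  simp [pos]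

lemma pos_mono : Monotone G.pos := fun _ _ hij =>
  Prod.mk_le_mk.2 ⟨by simpa [pos] using (List.take_sublist_take_left hij).count_le _,
    by simpa [pos] using (List.take_sublist_take_left hij).count_le _⟩

lemma pos_fst_add_snd {i : ℕ} (hi : i < G.numTiles) : (G.pos i).1 + (G.pos i).2 = i := by
  have hcount : ∀ l : List Dir, l.count Dir.east + l.count Dir.north = l.length := by
    intro l
    induction l with
    | nil => rfl
    | cons d t ih => cases d <;> simp [← ih] <;> omega
  have := hcount (G.dirs.take i)
  rw [List.length_take, min_eq_left (by simp [numTiles] at hi; omega)] at this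
  simp only [pos]
  omega

lemma nonneg_of_mem_tiles {p : ℤ × ℤ} (hp : p ∈ G.tiles) : 0 ≤ p := by
  obtain ⟨i, -, rfl⟩ := G.mem_tiles.1 hp
  exact G.pos_zero ▸ G.pos_mono (Nat.zero_le i)

lemma eq_of_mem_tiles_of_add_eq {p q : ℤ × ℤ} (hp : p ∈ G.tiles) (hq : q ∈ G.tiles)
    (h : p.1 + p.2 = q.1 + q.2) : p = q := by
  obtain ⟨i, hi, rfl⟩ := G.mem_tiles.1 hp
  obtain ⟨j, hj, rfl⟩ := G.mem_tiles.1 hq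
  have : i = j := by have := G.pos_fst_add_snd hi; have := G.pos_fst_add_snd hj; omega
  rw [this]

lemma notMem_tiles_left_or_below {a b : ℤ} (h : (a, b) ∉ G.tiles) :
    (∀ k ≤ a, (k, b) ∉ G.tiles) ∨ (∀ l ≤ b, (a, l) ∉ G.tiles) := by
  by_contra! ⟨⟨k, hka, hk⟩, ⟨l, hlb, hl⟩⟩
  obtain ⟨i, hi, hpi⟩ := G.mem_tiles.1 hk
  obtain ⟨j, hj, hpj⟩ := G.mem_tiles.1 hl
  have hsi := G.pos_fst_add_snd hi
  have hsj := G.pos_fst_add_snd hj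
  rw [hpi] at hsi
  rw [hpj] at hsj
  rcases le_total i j with hij | hij
  · have := (Prod.mk_le_mk.1 (hpi ▸ hpj ▸ G.pos_mono hij)).2
    exact h (by rwa [show l = b by omega] at hl)
  · have := (Prod.mk_le_mk.1 (hpi ▸ hpj ▸ G.pos_mono hij)).1
    exact h (by rwa [show k = a by omega] at hk)

end Geometry

section Covers

variable {G : SnakeGraph}

lemma mem_vertices_of_mem_ends {e : SnakeEdge} {v : ℤ × ℤ} (he : e ∈ G.edges)
    (hv : v ∈ ends e) : v ∈ G.vertices := by
  obtain ⟨p, hp, hep⟩ := Finset.mem_biUnion.1 he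
  refine Finset.mem_biUnion.2 ⟨p, hp, ?_⟩
  obtain ⟨⟨a, b⟩, _ | _⟩ := e <;> rcases mem_tileEdges_iff.1 hep with rfl | rfl <;>
    simp only [ends, if_true, if_false, Bool.false_eq_true, Finset.mem_insert,
      Finset.mem_singleton] at hv <;> rcases hv with rfl | rfl <;> simp [tileVertices, otherSquare]

lemma IsDDimerCover.card_filter_mem_ends {d : ℕ} {D : Multiset SnakeEdge}
    (hD : G.IsDDimerCover d D) (v : ℤ × ℤ) :
    Multiset.card (D.filter fun e => v ∈ ends e) = if v ∈ G.vertices then d else 0 := by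
  split_ifs with hv
  · exact hD.2 v hv
  · exact Multiset.card_eq_zero.2 (Multiset.filter_eq_nil.2 fun e he hve =>
      hv (mem_vertices_of_mem_ends (hD.1 e he) hve))

lemma IsDDimerCover.count_le {d : ℕ} {D : Multiset SnakeEdge} (hD : G.IsDDimerCover d D)
    (e : SnakeEdge) : D.count e ≤ d := by
  by_cases he : e ∈ D
  · have hv : e.1 ∈ ends e := by obtain ⟨p, _ | _⟩ := e <;> simp [ends]
    calc D.count e = Multiset.card (D.filter (e = ·)) := Multiset.count_eq_card_filter_eq D e
      _ ≤ Multiset.card (D.filter fun x => e.1 ∈ ends x) :=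
        Multiset.card_le_card (Multiset.monotone_filter_right D fun x hx => hx ▸ hv)
      _ = d := hD.2 _ (mem_vertices_of_mem_ends (hD.1 e he) hv)
  · simp [Multiset.count_eq_zero_of_notMem he]

lemma IsPerfectMatching.isDDimerCover_doubled {P : Finset SnakeEdge}
    (hP : G.IsPerfectMatching P) : G.IsDDimerCover 2 (doubled P) := by
  have hfull : Finset.Icc 0 (G.numTiles - 1) = Finset.range G.numTiles := by
    ext k; simp [numTiles]
  have hedges : G.intervalEdges 0 (G.numTiles - 1) = G.edges := by
    rw [intervalEdges, hfull, edges, tiles, Finset.image_biUnion]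
  have hvertices : G.intervalVertices 0 (G.numTiles - 1) = G.vertices := by
    rw [intervalVertices, hfull, vertices, tiles, Finset.image_biUnion]
  refine ⟨fun e he => ?_, fun v hv => ?_⟩
  · rw [doubled, Multiset.mem_add, or_self] at he
    exact hedges ▸ hP.1 he
  · have hone : Multiset.card (P.val.filter fun e => v ∈ ends e) = 1 := hP.2 v (hvertices ▸ hv)
    rw [doubled, Multiset.filter_add, Multiset.card_add, hone]

/-- The checkerboard sign turns the balance of two dimer covers at each vertex into the
closedness condition `twistedDiff_balance`, which makes the twisted difference a discrete
gradient (`eq_zero_iff_height_eq`). -/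
def twistedDiff (D D' : Multiset SnakeEdge) (e : SnakeEdge) : ℤ :=
  (e.1.1 + e.1.2).negOnePow * ((D.count e : ℤ) - D'.count e)

lemma twistedDiff_eq_zero_iff {D D' : Multiset SnakeEdge} {e : SnakeEdge} :
    twistedDiff D D' e = 0 ↔ D.count e = D'.count e := by
  simp [twistedDiff, sub_eq_zero]

variable {d : ℕ} {D D' : Multiset SnakeEdge}

lemma twistedDiff_of_notMem_edges (hD : G.IsDDimerCover d D) (hD' : G.IsDDimerCover d D')
    {e : SnakeEdge} (he : e ∉ G.edges) : twistedDiff D D' e = 0 := by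
  rw [twistedDiff_eq_zero_iff, Multiset.count_eq_zero_of_notMem fun h => he (hD.1 e h),
    Multiset.count_eq_zero_of_notMem fun h => he (hD'.1 e h)]

lemma twistedDiff_balance (hD : G.IsDDimerCover d D) (hD' : G.IsDDimerCover d D') (a b : ℤ) :
    twistedDiff D D' ((a, b), true) + twistedDiff D D' ((a, b), false) =
      twistedDiff D D' ((a - 1, b), true) + twistedDiff D D' ((a, b - 1), false) := by
  have hcount := (hD.card_filter_mem_ends (a, b)).trans (hD'.card_filter_mem_ends (a, b)).symm
  rw [card_filter_mem_ends, card_filter_mem_ends] at hcount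
  have hsign₁ : ((a - 1 + b).negOnePow : ℤ) = -(a + b).negOnePow := by
    rw [show a - 1 + b = a + b - 1 by ring, Int.negOnePow_sub, Int.negOnePow_one]; simp
  have hsign₂ : ((a + (b - 1)).negOnePow : ℤ) = -(a + b).negOnePow := by
    rw [show a + (b - 1) = a + b - 1 by ring, Int.negOnePow_sub, Int.negOnePow_one]; simp
  simp only [twistedDiff, hsign₁, hsign₂]
  zify at hcount
  linear_combination ((a + b).negOnePow : ℤ) * hcount

end Covers

section SnakeHeight

variable {G : SnakeGraph} {d : ℕ} {D D' : Multiset SnakeEdge}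
  (hD : G.IsDDimerCover d D) (hD' : G.IsDDimerCover d D')
include hD hD'

lemma twistedDiff_of_fst_neg {e : SnakeEdge} (he : e.1.1 < 0) : twistedDiff D D' e = 0 := by
  refine twistedDiff_of_notMem_edges hD hD' fun hmem => ?_
  rcases G.mem_edges_iff.1 hmem with h | h <;> have := (G.nonneg_of_mem_tiles h).1
  · exact absurd this (by simpa using he)
  · obtain ⟨⟨a, b⟩, _ | _⟩ := e <;> simp_all [otherSquare] <;> omega

lemma mem_symmDiff_iff_height_ne {e : SnakeEdge} :
    e ∈ symmDiff D D' ↔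
      height (twistedDiff D D') e.1 ≠ height (twistedDiff D D') (otherSquare e) := by
  rw [mem_symmDiff_iff_count_ne, Ne, ← twistedDiff_eq_zero_iff,
    eq_zero_iff_height_eq (fun _ => twistedDiff_of_fst_neg hD hD') (twistedDiff_balance hD hD')]

lemma height_eq_zero_of_forall_left {a b : ℤ} (h : ∀ k ≤ a, (k, b) ∉ G.tiles) :
    height (twistedDiff D D') (a, b) = 0 := by
  refine Finset.sum_eq_zero fun k hk => twistedDiff_of_notMem_edges hD hD' ?_
  have hka : (k : ℤ) ≤ a := by simp at hk; omega
  simp [mem_edges_iff, otherSquare, h _ hka, h _ (show (k : ℤ) - 1 ≤ a by omega)]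

lemma height_eq_zero_of_forall_below {a b : ℤ} (h : ∀ l ≤ b, (a, l) ∉ G.tiles) :
    height (twistedDiff D D') (a, b) = 0 := by
  induction b using Int.induction_of_neg_of_pred with
  | hneg b hb =>
    exact height_eq_zero_of_forall_left hD hD' fun k _ hk => by
      simpa using hb.trans_le (G.nonneg_of_mem_tiles hk).2
  | hpred b ih =>
    have hedge : twistedDiff D D' ((a, b), true) = 0 :=
      twistedDiff_of_notMem_edges hD hD' <| by
        simp [mem_edges_iff, otherSquare, h b le_rfl, h (b - 1) (by omega)]
    rw [← height_below_sub_height (fun _ => twistedDiff_of_fst_neg hD hD')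
      (twistedDiff_balance hD hD'), ih fun l hl => h l (by omega)] at hedge
    linarith

lemma height_eq_zero_of_notMem_tiles {p : ℤ × ℤ} (hp : p ∉ G.tiles) :
    height (twistedDiff D D') p = 0 :=
  (G.notMem_tiles_left_or_below hp).elim (height_eq_zero_of_forall_left hD hD')
    (height_eq_zero_of_forall_below hD hD')

end SnakeHeight

section Completion

variable {G : SnakeGraph}

lemma count_completion_le_two {H : Multiset SnakeEdge} (hH : ∀ e, H.count e ≤ 2)
    (e : SnakeEdge) : (G.completion H).count e ≤ 2 := by
  rw [completion, Multiset.count_add, Multiset.count_eq_of_nodup (Finset.nodup _)]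
  split_ifs with he
  · simp [Multiset.count_eq_zero.2 (Finset.mem_filter.1 he).2.1]
  · exact hH e

lemma count_symmDiff_le {d : ℕ} {D D' : Multiset SnakeEdge} (hD : G.IsDDimerCover d D)
    (hD' : G.IsDDimerCover d D') (e : SnakeEdge) : (symmDiff D D').count e ≤ d := by
  rw [symmDiff, Multiset.count_sub, Multiset.count_union]
  exact (Nat.sub_le _ _).trans (max_le (hD.count_le e) (hD'.count_le e))

lemma exists_mem_tileEdges_otherSquare_notMem_tiles (p : ℤ × ℤ) :
    ∃ e ∈ tileEdges p, e.1 = p ∧ otherSquare e ∉ G.tiles := by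
  by_cases hleft : (p.1 - 1, p.2) ∈ G.tiles
  · refine ⟨south p, by simp [tileEdges], rfl, fun hbelow => ?_⟩
    have := G.eq_of_mem_tiles_of_add_eq hleft hbelow (by simp [south, otherSquare]; ring)
    simp [south, otherSquare, Prod.ext_iff] at this
  · exact ⟨west p, by simp [tileEdges], rfl, hleft⟩

variable {d : ℕ} {D D' : Multiset SnakeEdge}

/-- Every edge of `D ⊖ D'` separates squares of different heights, and every tile has an edge
facing a square outside the snake, where the height is zero. -/
lemma toFinset_completion_symmDiff (hD : G.IsDDimerCover d D) (hD' : G.IsDDimerCover d D') :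
    (G.completion (symmDiff D D')).toFinset =
      (G.tiles.filter fun p => height (twistedDiff D D') p ≠ 0).biUnion tileEdges := by
  have htile : ∀ p, height (twistedDiff D D') p ≠ 0 → p ∈ G.tiles := fun p hp =>
    by_contra fun h => hp (height_eq_zero_of_notMem_tiles hD hD' h)
  ext e
  simp only [completion, Multiset.toFinset_add, Finset.mem_union, Multiset.mem_toFinset,
    Finset.val_toFinset, Finset.mem_filter, Finset.mem_biUnion]
  constructor
  · rintro (he | ⟨-, -, p, hp, hep, e', he', hK⟩)
    · rw [mem_symmDiff_iff_height_ne hD hD'] at he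
      by_cases h₁ : height (twistedDiff D D') e.1 = 0
      · have h₂ : height (twistedDiff D D') (otherSquare e) ≠ 0 := h₁ ▸ Ne.symm he
        exact ⟨otherSquare e, ⟨htile _ h₂, h₂⟩, mem_tileEdges_iff.2 (Or.inr rfl)⟩
      · exact ⟨e.1, ⟨htile _ h₁, h₁⟩, mem_tileEdges_iff.2 (Or.inl rfl)⟩
    · refine ⟨p, ⟨hp, ?_⟩, hep⟩
      rw [tileBoundary, Finset.mem_inter, mem_tileEdges_iff, mem_boundaryEdges_iff] at he'
      rw [mem_symmDiff_iff_height_ne hD hD'] at hK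
      obtain ⟨rfl | rfl, hb⟩ := he'
      · rwa [height_eq_zero_of_notMem_tiles hD hD' (hb.1 hp)] at hK
      · rwa [height_eq_zero_of_notMem_tiles hD hD' fun h => hb.1 h hp, ne_comm] at hK
  · rintro ⟨p, ⟨hp, hh⟩, hep⟩
    by_cases he : e ∈ symmDiff D D'
    · exact Or.inl he
    · obtain ⟨e', he'p, hfst, hout⟩ := G.exists_mem_tileEdges_otherSquare_notMem_tiles p
      refine Or.inr ⟨Finset.mem_biUnion.2 ⟨p, hp, hep⟩, he, p, hp, hep, e', ?_, ?_⟩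
      · exact Finset.mem_inter.2
          ⟨he'p, G.mem_boundaryEdges_iff.2 (iff_of_true (hfst ▸ hp) hout)⟩
      · rw [mem_symmDiff_iff_height_ne hD hD', hfst,
          height_eq_zero_of_notMem_tiles hD hD' hout]
        exact hh

end Completion

end SnakeGraph

open SnakeGraph in
/-- Let `G` be a snake graph, `D` a double dimer cover of `G` and `D_min`
the minimal double dimer cover (two copies of each edge of the minimal perfect matching).
Then the symmetric difference `D ⊖ D_min` consists of (single or double) edges enclosing
sets of consecutive tiles of `G`, and its completion `(D ⊖ D_min)^c` is a snake
sub-multigraph of the doubled graph of `G`. -/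
theorem completion_symmDiff_isSnakeSubMultigraph
    (G : SnakeGraph) (Pmin : Finset SnakeEdge) (hmin : G.IsMinimalMatching Pmin)
    (D : Multiset SnakeEdge) (hD : G.IsDoubleDimerCover D) :
    G.IsSnakeSubMultigraph (G.completion (symmDiff D (doubled Pmin))) := by
  have hPmin : G.IsDDimerCover 2 (doubled Pmin) := IsPerfectMatching.isDDimerCover_doubled hmin.1
  obtain ⟨S, hle, hsep, hS⟩ := Finset.exists_pairwise_separated_Icc_cover
    ((Finset.range G.numTiles).filter fun i =>
      height (twistedDiff D (doubled Pmin)) (G.pos i) ≠ 0)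
  refine ⟨count_completion_le_two (count_symmDiff_le hD hPmin), S,
    fun p hp => ⟨hle p hp, ?_⟩, fun p hp q hq => hsep hp hq, ?_⟩
  · have hp₂ : p.2 ∈ S.biUnion fun p => Finset.Icc p.1 p.2 :=
      Finset.mem_biUnion.2 ⟨p, hp, by simp [hle p hp]⟩
    rw [← hS] at hp₂
    simpa using (Finset.mem_filter.1 hp₂).1
  · rw [toFinset_completion_symmDiff hD hPmin, tiles, Finset.filter_image,
      Finset.image_biUnion, hS, Finset.biUnion_biUnion]
    rfl
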